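/- arXiv:2102.06113 — 2 statements merged into one kernel-verified Lean document; each statement's English description precedes it below -/
import Mathlib

section
/- For any pair (g₁,g₂) of 2×2 matrices over a commutative ring with det g₁ = det g₂ = 1, the 4×4 matrix ι₁(g₁,g₂) preserves the quadratic form given by the antidiagonal matrix J₄ with 1's on the antidiagonal, i.e., ᵗι₁(g₁,g₂) · J₄ · ι₁(g₁,g₂) = J₄; equivalently, ι₁(g₁,g₂) ∈ SO₄ with respect to J₄. -/
open Matrix

/-- The map ι₁ of the paper: given a pair of 2×2 matrices, produce the explicit 4×4 matrix. -/
def iota1 {R : Type*} [CommRing R] (g g' : Matrix (Fin 2) (Fin 2) R) :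
    Matrix (Fin 4) (Fin 4) R :=
  !![g 0 0 * g' 0 0, -(g 0 0 * g' 0 1), g 0 1 * g' 0 0, g 0 1 * g' 0 1;
     -(g 0 0 * g' 1 0), g 0 0 * g' 1 1, -(g 0 1 * g' 1 0), -(g 0 1 * g' 1 1);
     g 1 0 * g' 0 0, -(g 1 0 * g' 0 1), g 1 1 * g' 0 0, g 1 1 * g' 0 1;
     g 1 0 * g' 1 0, -(g 1 0 * g' 1 1), g 1 1 * g' 1 0, g 1 1 * g' 1 1]

/-- The 4×4 antidiagonal matrix J₄. -/
def J4 (R : Type*) [CommRing R] : Matrix (Fin 4) (Fin 4) R :=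
  !![0, 0, 0, 1; 0, 0, 1, 0; 0, 1, 0, 0; 1, 0, 0, 0]

/-!
Index `Fin 4` by `Fin 2 × Fin 2` through `(i, k) ↦ 2 i + k`. Up to conjugation by the sign matrix
`S = diag(1, -1, 1, 1)`, `ι₁(g₁, g₂)` is the Kronecker product `g₁ ⊗ g₂` and `J₄` is `ω ⊗ ω` with
`ω = !![0, 1; -1, 0]`. Since `gᵀ ω g = (det g) ω` for every 2×2 matrix `g`, the product `g₁ ⊗ g₂`
rescales `ω ⊗ ω` by `det g₁ · det g₂`, and `det (g₁ ⊗ g₂) = (det g₁)² (det g₂)²`.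
-/

open scoped Kronecker

section Congruence

variable {m n R : Type*} [Fintype m] [Fintype n] [CommSemiring R]

theorem reindex_transpose_mul_mul (e : m ≃ n) (M B : Matrix m m R) :
    (reindex e e M)ᵀ * reindex e e B * reindex e e M = reindex e e (Mᵀ * B * M) := by
  simp only [reindex_apply, transpose_submatrix]
  rw [submatrix_mul_equiv, submatrix_mul_equiv]

theorem transpose_mul_mul_conj_involution [DecidableEq m] {S : Matrix m m R} (hSt : Sᵀ = S)
    (hSS : S * S = 1) (M B : Matrix m m R) :
    (S * M * S)ᵀ * (S * B * S) * (S * M * S) = S * (Mᵀ * B * M) * S := by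
  simp only [transpose_mul, hSt, Matrix.mul_assoc]
  rw [← Matrix.mul_assoc S S, hSS, Matrix.one_mul, ← Matrix.mul_assoc S S, hSS, Matrix.one_mul]

theorem kronecker_transpose_mul_mul (A C : Matrix m m R) (B D : Matrix n n R) :
    (A ⊗ₖ B)ᵀ * (C ⊗ₖ D) * (A ⊗ₖ B) = (Aᵀ * C * A) ⊗ₖ (Bᵀ * D * B) := by
  rw [← kroneckerMap_transpose, ← mul_kronecker_mul, ← mul_kronecker_mul]

end Congruence

theorem det_conj_involution {m R : Type*} [Fintype m] [DecidableEq m] [CommRing R]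
    {S : Matrix m m R} (hSS : S * S = 1) (M : Matrix m m R) : (S * M * S).det = M.det := by
  rw [det_mul, det_mul, mul_right_comm, ← det_mul, hSS, det_one, one_mul]

section FinTwo

variable {R : Type*} [CommRing R]

variable (R) in
def symplecticForm2 : Matrix (Fin 2) (Fin 2) R := !![0, 1; -1, 0]

theorem transpose_mul_symplecticForm2_mul (g : Matrix (Fin 2) (Fin 2) R) :
    gᵀ * symplecticForm2 R * g = g.det • symplecticForm2 R := by
  ext i j
  fin_cases i <;> fin_cases j <;>
    simp [symplecticForm2, det_fin_two, mul_apply, Fin.sum_univ_two] <;> ring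

variable (R) in
def signFlip : Matrix (Fin 2 × Fin 2) (Fin 2 × Fin 2) R :=
  diagonal fun p => if p = (0, 1) then -1 else 1

theorem signFlip_transpose : (signFlip R)ᵀ = signFlip R :=
  diagonal_transpose _

theorem signFlip_mul_self : signFlip R * signFlip R = 1 := by
  rw [signFlip, diagonal_mul_diagonal, ← diagonal_one]
  congr 1
  ext p
  split_ifs <;> simp

theorem iota1_eq_reindex_kronecker (g₁ g₂ : Matrix (Fin 2) (Fin 2) R) :
    iota1 g₁ g₂ =
      reindex finProdFinEquiv finProdFinEquiv (signFlip R * (g₁ ⊗ₖ g₂) * signFlip R) := by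
  ext i j
  fin_cases i <;> fin_cases j <;>
    simp [iota1, signFlip, finProdFinEquiv, Fin.divNat, Fin.modNat]

variable (R) in
theorem J4_eq_reindex_kronecker :
    J4 R = reindex finProdFinEquiv finProdFinEquiv
      (signFlip R * (symplecticForm2 R ⊗ₖ symplecticForm2 R) * signFlip R) := by
  ext i j
  fin_cases i <;> fin_cases j <;>
    simp [J4, signFlip, symplecticForm2, finProdFinEquiv, Fin.divNat, Fin.modNat]

end FinTwo

/-- For any pair (g₁,g₂) of 2×2 matrices with det g₁ = det g₂ = 1, the matrix
ι₁(g₁,g₂) lies in SO₄ with respect to J₄: ᵗι₁(g₁,g₂) · J₄ · ι₁(g₁,g₂) = J₄ and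
det ι₁(g₁,g₂) = 1. -/
theorem iota1_mem_SO4 {R : Type*} [CommRing R] (g₁ g₂ : Matrix (Fin 2) (Fin 2) R)
    (hg₁ : g₁.det = 1) (hg₂ : g₂.det = 1) :
    (iota1 g₁ g₂)ᵀ * J4 R * iota1 g₁ g₂ = J4 R ∧ (iota1 g₁ g₂).det = 1 := by
  rw [iota1_eq_reindex_kronecker, J4_eq_reindex_kronecker]
  constructor
  · rw [reindex_transpose_mul_mul,
      transpose_mul_mul_conj_involution signFlip_transpose signFlip_mul_self,
      kronecker_transpose_mul_mul, transpose_mul_symplecticForm2_mul,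
      transpose_mul_symplecticForm2_mul, hg₁, hg₂, one_smul]
  · rw [det_reindex_self, det_conj_involution signFlip_mul_self, det_kronecker, hg₁, hg₂,
      one_pow, one_mul]
end

section
/- Under the embedding ι : G → SO₅, the image of the unipotent subgroup N₁ = {((1, c/2; 0, 1), (1, -c; 0, 1)) : c ∈ R} is the set of 5×5 matrices of the form with rows (1,0,c,0,-c²/2), (0,1,0,0,0), (0,0,1,0,-c), (0,0,0,1,0), (0,0,0,0,1). -/
/-!
ι₁ sends a pair of upper unitriangular 2×2 matrices to an upper unitriangular 4×4 matrix, and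
ι₂ sends any upper unitriangular 4×4 matrix to an upper unitriangular 5×5 one whose entries
depend linearly on the given ones; every cancellation this needs comes from ⅟2 + ⅟2 = 1.
For the pair ((1, c/2; 0, 1), (1, -c; 0, 1)) the remaining linear expressions collapse to c, -c and -c²/2.
-/

open Matrix

/-- The map ι₂ : SO₄ → SO₅ of the paper (Section 2.2), written out entrywise.
Here the 4×4 input has entries a1 a2 b1 b2 / a3 a4 b3 b4 / c1 c2 d1 d2 / c3 c4 d3 d4. -/
def iota2 {R : Type*} [CommRing R] [Invertible (2 : R)] (A : Matrix (Fin 4) (Fin 4) R) :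
    Matrix (Fin 5) (Fin 5) R :=
  let h : R := ⅟(2 : R)
  !![A 0 0, h ^ 2 * A 0 1 - h * A 0 2, h * A 0 1 + A 0 2, -(h * A 0 1) + A 0 2, A 0 3;
     A 1 0 - h * A 2 0,
       h ^ 2 * A 1 1 - h * A 1 2 + h - h ^ 3 * A 2 1 + h ^ 2 * A 2 2,
       h * A 1 1 - A 1 2 - h ^ 2 * A 2 1 - h * A 2 2,
       -(h * A 1 1) - A 1 2 + 1 + h ^ 2 * A 2 1 - h * A 2 2,
       A 1 3 - h * A 2 3;
     A 1 0 + h * A 2 0,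
       h ^ 2 * A 1 1 - h * A 1 2 + h ^ 3 * A 2 1 - h ^ 2 * A 2 2,
       h * A 1 1 + A 1 2 + h ^ 2 * A 2 1 + h * A 2 2,
       -(h * A 1 1) - A 1 2 - h ^ 2 * A 2 1 + h * A 2 2,
       A 1 3 + h * A 2 3;
     -(h * A 1 0) + h ^ 2 * A 2 0,
       -(h ^ 3 * A 1 1) - h ^ 2 * A 1 2 + h ^ 2 + h ^ 4 * A 2 1 - h ^ 3 * A 2 2,
       -(h ^ 2 * A 1 1) - h * A 1 2 + h ^ 3 * A 2 1 + h ^ 2 * A 2 2,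
       h ^ 2 * A 1 1 - h * A 1 2 + h - h ^ 3 * A 2 1 + h ^ 2 * A 2 2,
       -(h * A 1 3) + h ^ 2 * A 2 3;
     A 3 0, h ^ 2 * A 3 1 - h * A 3 2, h * A 3 1 + A 3 2, -(h * A 3 1) + A 3 2, A 3 3]

/-- The composite embedding ι = ι₂ ∘ ι₁. -/
def iota {R : Type*} [CommRing R] [Invertible (2 : R)]
    (g g' : Matrix (Fin 2) (Fin 2) R) : Matrix (Fin 5) (Fin 5) R :=
  iota2 (iota1 g g')

theorem iota1_upper_unipotent {R : Type*} [CommRing R] (a b : R) :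
    iota1 !![(1 : R), a; 0, 1] !![(1 : R), b; 0, 1]
      = !![1, -b, a, a * b;
           0, 1, 0, -a;
           0, 0, 1, b;
           0, 0, 0, 1] := by
  ext i j
  fin_cases i <;> fin_cases j <;> simp [iota1]

theorem iota2_upper_unipotent {R : Type*} [CommRing R] [Invertible (2 : R)] (x y z w v : R) :
    iota2 !![1, x, y, z;
             0, 1, 0, w;
             0, 0, 1, v;
             0, 0, 0, 1]
      = !![1, ⅟2 ^ 2 * x - ⅟2 * y, ⅟2 * x + y, -(⅟2 * x) + y, z;
           0, 1, 0, 0, w - ⅟2 * v;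
           0, 0, 1, 0, w + ⅟2 * v;
           0, 0, 0, 1, -(⅟2 * w) + ⅟2 ^ 2 * v;
           0, 0, 0, 0, 1] := by
  have half : (⅟2 : R) + ⅟2 = 1 := invOf_two_add_invOf_two
  ext i j
  fin_cases i <;> fin_cases j <;> simp [iota2] <;> grind

/-- Lemma 2.8 of the paper: the image under ι of the unipotent element
((1, c/2; 0, 1), (1, -c; 0, 1)) of N₁ is the displayed 5×5 unipotent matrix. -/
theorem iota_N1 {R : Type*} [CommRing R] [Invertible (2 : R)] (c : R) :
    iota !![(1 : R), ⅟(2 : R) * c; 0, 1] !![(1 : R), -c; 0, 1]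
      = !![1, 0, c, 0, -(⅟(2 : R) * c ^ 2);
           0, 1, 0, 0, 0;
           0, 0, 1, 0, -c;
           0, 0, 0, 1, 0;
           0, 0, 0, 0, 1] := by
  have half : (⅟2 : R) + ⅟2 = 1 := invOf_two_add_invOf_two
  rw [iota, iota1_upper_unipotent, iota2_upper_unipotent]
  ext i j
  fin_cases i <;> fin_cases j <;> simp <;> grind
end
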